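/- arXiv:2605.24801 — 2 statements merged into one kernel-verified Lean document; each statement's English description precedes it below -/
import Mathlib

section
/- For every admissible integer n, the transitive tournament TT_n admits a chain–collider–fork decomposition containing exactly (⌈(n+1)/2⌉ − 1)/2 colliders, exactly n(n−1)/4 − (⌈(n+1)/2⌉ − 1)/2 chains, and no forks. -/
/-- The arc set of the transitive tournament `TT n` on vertices `Fin n`
(vertex `v_{i+1}` of the paper is index `i`): there is an arc `(i, j)` iff `i < j`. -/
def ttArcs (n : ℕ) : Finset (Fin n × Fin n) :=
  Finset.univ.filter fun p => p.1 < p.2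

/-- A chain: a two-arc block `{(i,j), (j,k)}` with `i < j < k`. -/
def IsChainMotif {n : ℕ} (b : Finset (Fin n × Fin n)) : Prop :=
  ∃ i j k : Fin n, i < j ∧ j < k ∧ b = {(i, j), (j, k)}

/-- A collider: a two-arc block `{(i,j), (k,j)}` with `i, k < j` and `i ≠ k`. -/
def IsColliderMotif {n : ℕ} (b : Finset (Fin n × Fin n)) : Prop :=
  ∃ i k j : Fin n, i < j ∧ k < j ∧ i ≠ k ∧ b = {(i, j), (k, j)}

/-- A fork: a two-arc block `{(i,j), (i,k)}` with `i < j`, `i < k` and `j ≠ k`. -/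
def IsForkMotif {n : ℕ} (b : Finset (Fin n × Fin n)) : Prop :=
  ∃ i j k : Fin n, i < j ∧ i < k ∧ j ≠ k ∧ b = {(i, j), (i, k)}

instance {n : ℕ} : DecidablePred (IsChainMotif (n := n)) := fun b => by
  unfold IsChainMotif; infer_instance

instance {n : ℕ} : DecidablePred (IsColliderMotif (n := n)) := fun b => by
  unfold IsColliderMotif; infer_instance

instance {n : ℕ} : DecidablePred (IsForkMotif (n := n)) := fun b => by
  unfold IsForkMotif; infer_instance

/-- `P` is a decomposition of the arc set of `TT n`: its blocks are pairwise
disjoint and their union is the whole arc set. -/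
def IsTTDecomposition {n : ℕ} (P : Finset (Finset (Fin n × Fin n))) : Prop :=
  (P : Set (Finset (Fin n × Fin n))).PairwiseDisjoint id ∧ P.sup id = ttArcs n

/-- `n` is admissible iff `n ≡ 0` or `1 (mod 4)`. -/
def Admissible (n : ℕ) : Prop := n % 4 = 0 ∨ n % 4 = 1

/- ======================= auxiliary development ======================= -/

lemma mem_ttArcs {n : ℕ} {p : Fin n × Fin n} : p ∈ ttArcs n ↔ p.1 < p.2 := by
  simp [ttArcs]

def pfn (n i j : ℕ) : ℕ × ℕ :=
  if i + j = n - 1 then (if i % 2 = 0 then (i + 1, j) else (i - 1, i))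
  else if i + j = n ∧ i % 2 = 1 then (i - 1, j)
  else if i + j < n - 1 then
    (if i % 2 = 0 ∧ j = i + 1 then (j, n - 1 - j) else (j, n - 1 - i))
  else (n - 1 - j, i)

set_option maxHeartbeats 1000000 in
lemma pfn_spec {n : ℕ} (hadm : n % 4 = 0 ∨ n % 4 = 1) {i j : ℕ} (hij : i < j) (hj : j < n) :
    (pfn n i j).1 < (pfn n i j).2 ∧ (pfn n i j).2 < n ∧
    pfn n (pfn n i j).1 (pfn n i j).2 = (i, j) ∧
    pfn n i j ≠ (i, j) ∧
    ((pfn n i j).1 = j ∨ (pfn n i j).2 = i ∨ ((pfn n i j).2 = j ∧ (pfn n i j).1 ≠ i)) ∧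
    (((pfn n i j).2 = j ∧ (pfn n i j).1 ≠ i) ↔
      ((i + j = n - 1 ∧ i % 2 = 0 ∧ (pfn n i j).1 = i + 1) ∨
       (i + j = n ∧ i % 2 = 1 ∧ (pfn n i j).1 = i - 1))) ∧
    ((i + j = n - 1 ∧ i % 2 = 0) → ((pfn n i j).2 = j ∧ (pfn n i j).1 ≠ i)) := by
  unfold pfn
  split_ifs <;>
    simp only [Prod.mk.injEq, ne_eq, eq_self_iff_true, true_and, and_true, not_true,
      true_or, or_true, iff_true, true_iff] at * <;> omega

def partner {n : ℕ} (p : Fin n × Fin n) : Fin n × Fin n :=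
  (⟨(pfn n p.1.1 p.2.1).1 % n, Nat.mod_lt _ p.1.pos⟩,
   ⟨(pfn n p.1.1 p.2.1).2 % n, Nat.mod_lt _ p.1.pos⟩)

lemma partner_spec {n : ℕ} (hadm : Admissible n) {p : Fin n × Fin n} (hp : p.1 < p.2) :
    (partner p).1 < (partner p).2 ∧
    partner (partner p) = p ∧
    partner p ≠ p ∧
    ((partner p).1.1 = p.2.1 ∨ (partner p).2.1 = p.1.1 ∨
       ((partner p).2.1 = p.2.1 ∧ (partner p).1.1 ≠ p.1.1)) ∧
    (((partner p).2.1 = p.2.1 ∧ (partner p).1.1 ≠ p.1.1) ↔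
       ((p.1.1 + p.2.1 = n - 1 ∧ p.1.1 % 2 = 0 ∧ (partner p).1.1 = p.1.1 + 1) ∨
        (p.1.1 + p.2.1 = n ∧ p.1.1 % 2 = 1 ∧ (partner p).1.1 = p.1.1 - 1))) ∧
    ((p.1.1 + p.2.1 = n - 1 ∧ p.1.1 % 2 = 0) →
       ((partner p).2.1 = p.2.1 ∧ (partner p).1.1 ≠ p.1.1)) := by
  have hij : p.1.1 < p.2.1 := hp
  obtain ⟨h1, h2, h3, h4, h5, h6, h7⟩ := pfn_spec hadm hij p.2.isLt
  have hfa : (partner p).1.1 = (pfn n p.1.1 p.2.1).1 := by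
    show (pfn n p.1.1 p.2.1).1 % n = _
    exact Nat.mod_eq_of_lt (lt_trans h1 h2)
  have hfb : (partner p).2.1 = (pfn n p.1.1 p.2.1).2 := by
    show (pfn n p.1.1 p.2.1).2 % n = _
    exact Nat.mod_eq_of_lt h2
  have key : pfn n (partner p).1.1 (partner p).2.1 = (p.1.1, p.2.1) := by
    rw [hfa, hfb]; exact h3
  refine ⟨?_, ?_, ?_, ?_, ?_, ?_⟩
  · show (partner p).1.1 < (partner p).2.1
    rw [hfa, hfb]; exact h1
  · have e1 : (partner (partner p)).1.1 = p.1.1 := by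
      show (pfn n (partner p).1.1 (partner p).2.1).1 % n = p.1.1
      rw [key]
      exact Nat.mod_eq_of_lt p.1.isLt
    have e2 : (partner (partner p)).2.1 = p.2.1 := by
      show (pfn n (partner p).1.1 (partner p).2.1).2 % n = p.2.1
      rw [key]
      exact Nat.mod_eq_of_lt p.2.isLt
    exact Prod.ext (Fin.ext e1) (Fin.ext e2)
  · intro heq
    apply h4
    have e1 : (pfn n p.1.1 p.2.1).1 = p.1.1 := by rw [← hfa, heq]
    have e2 : (pfn n p.1.1 p.2.1).2 = p.2.1 := by rw [← hfb, heq]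
    exact Prod.ext e1 e2
  · rw [hfa, hfb]; exact h5
  · rw [hfa, hfb]; exact h6
  · rw [hfa, hfb]; exact h7

lemma chain_not_collider {n : ℕ} {b : Finset (Fin n × Fin n)} (h : IsChainMotif b) :
    ¬ IsColliderMotif b := by
  obtain ⟨i, j, k, h1, h2, rfl⟩ := h
  rintro ⟨x, y, z, _, _, hne, he⟩
  have m1 : (i, j) ∈ ({(x, z), (y, z)} : Finset (Fin n × Fin n)) := he ▸ by simp
  have m2 : (j, k) ∈ ({(x, z), (y, z)} : Finset (Fin n × Fin n)) := he ▸ by simp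
  simp only [Finset.mem_insert, Finset.mem_singleton, Prod.mk.injEq] at m1 m2
  have hjz : j = z := by tauto
  have hkz : k = z := by tauto
  rw [hjz, hkz] at h2
  exact lt_irrefl _ h2

lemma chain_not_fork {n : ℕ} {b : Finset (Fin n × Fin n)} (h : IsChainMotif b) :
    ¬ IsForkMotif b := by
  obtain ⟨i, j, k, h1, h2, rfl⟩ := h
  rintro ⟨x, y, z, _, _, hne, he⟩
  have m1 : (i, j) ∈ ({(x, y), (x, z)} : Finset (Fin n × Fin n)) := he ▸ by simp
  have m2 : (j, k) ∈ ({(x, y), (x, z)} : Finset (Fin n × Fin n)) := he ▸ by simp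
  simp only [Finset.mem_insert, Finset.mem_singleton, Prod.mk.injEq] at m1 m2
  have hix : i = x := by tauto
  have hjx : j = x := by tauto
  rw [hix, hjx] at h1
  exact lt_irrefl _ h1

lemma collider_not_fork {n : ℕ} {b : Finset (Fin n × Fin n)} (h : IsColliderMotif b) :
    ¬ IsForkMotif b := by
  obtain ⟨i, k, j, h1, h2, hik, rfl⟩ := h
  rintro ⟨x, y, z, _, _, hne, he⟩
  have m1 : (i, j) ∈ ({(x, y), (x, z)} : Finset (Fin n × Fin n)) := he ▸ by simp
  have m2 : (k, j) ∈ ({(x, y), (x, z)} : Finset (Fin n × Fin n)) := he ▸ by simp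
  simp only [Finset.mem_insert, Finset.mem_singleton, Prod.mk.injEq] at m1 m2
  have hix : i = x := by tauto
  have hkx : k = x := by tauto
  exact hik (hix.trans hkx.symm)

lemma ttArcs_card (n : ℕ) : 2 * (ttArcs n).card = n * (n - 1) := by
  have h1 : (ttArcs n).card = ∑ j : Fin n, ((ttArcs n).filter fun p => p.2 = j).card :=
    Finset.card_eq_sum_card_fiberwise (fun p _ => Finset.mem_univ p.2)
  have h2 : ∀ j : Fin n, ((ttArcs n).filter fun p => p.2 = j).card = j.1 := by
    intro j
    rw [show j.1 = (Finset.range j.1).card from (Finset.card_range j.1).symm]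
    refine Finset.card_bij' (fun p _ => p.1.1)
      (fun t ht => ((⟨t, lt_trans (Finset.mem_range.mp ht) j.isLt⟩ : Fin n), j)) ?_ ?_ ?_ ?_
    case refine_1 =>
      intro p hp
      simp only [Finset.mem_filter, mem_ttArcs] at hp
      obtain ⟨hlt, rfl⟩ := hp
      exact Finset.mem_range.mpr hlt
    case refine_2 =>
      intro t ht
      simp only [Finset.mem_filter, mem_ttArcs]
      exact ⟨Finset.mem_range.mp ht, trivial⟩
    case refine_3 =>
      intro p hp
      simp only [Finset.mem_filter, mem_ttArcs] at hp
      obtain ⟨hlt, h2⟩ := hp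
      exact Prod.ext (Fin.ext rfl) h2.symm
    case refine_4 =>
      intro t ht
      rfl
  rw [h1, Finset.sum_congr rfl (fun j _ => h2 j)]
  have h3 : ∑ j : Fin n, j.1 = ∑ i ∈ Finset.range n, i := by
    exact Fin.sum_univ_eq_sum_range (fun i => i) n
  rw [h3]
  have := Finset.sum_range_id_mul_two n
  omega

theorem tt_chain_collider_decomposition (n : ℕ) (hadm : Admissible n) :
    ∃ P : Finset (Finset (Fin n × Fin n)),
      IsTTDecomposition P ∧ (∀ b ∈ P, IsChainMotif b ∨ IsColliderMotif b ∨ IsForkMotif b) ∧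
      (P.filter IsColliderMotif).card = ((n + 2) / 2 - 1) / 2 ∧
      (P.filter IsChainMotif).card = n * (n - 1) / 4 - ((n + 2) / 2 - 1) / 2 ∧
      (P.filter IsForkMotif).card = 0 := by
  classical
  set c₀ := ((n + 2) / 2 - 1) / 2 with hc₀
  set blk : Fin n × Fin n → Finset (Fin n × Fin n) := fun p => {p, partner p} with hblk
  set P := (ttArcs n).image blk with hP
  have hmem : ∀ b ∈ P, ∃ p ∈ ttArcs n, b = blk p := by
    intro b hb
    obtain ⟨p, hp, rfl⟩ := Finset.mem_image.mp hb
    exact ⟨p, hp, rfl⟩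
  have hmemArcs : ∀ p ∈ ttArcs n, partner p ∈ ttArcs n := fun p hp =>
    mem_ttArcs.mpr (partner_spec hadm (mem_ttArcs.mp hp)).1
  have hinv : ∀ p ∈ ttArcs n, partner (partner p) = p := fun p hp =>
    (partner_spec hadm (mem_ttArcs.mp hp)).2.1
  have hnep : ∀ p ∈ ttArcs n, partner p ≠ p := fun p hp =>
    (partner_spec hadm (mem_ttArcs.mp hp)).2.2.1
  have hblkinv : ∀ p ∈ ttArcs n, blk (partner p) = blk p := by
    intro p hp
    show ({partner p, partner (partner p)} : Finset _) = _
    rw [hinv p hp, Finset.pair_comm]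
  -- collider pattern gives a collider motif
  have hpatColl : ∀ p ∈ ttArcs n,
      ((partner p).2.1 = p.2.1 ∧ (partner p).1.1 ≠ p.1.1) → IsColliderMotif (blk p) := by
    intro p hp hc
    have hp' := mem_ttArcs.mp hp
    obtain ⟨h1, -, -, -, -, -⟩ := partner_spec hadm hp'
    refine ⟨p.1, (partner p).1, p.2, hp', ?_, ?_, ?_⟩
    · show (partner p).1.1 < p.2.1
      have := h1; rw [Fin.lt_def] at this; omega
    · intro he; exact hc.2 (congrArg Fin.val he).symm
    · show ({p, partner p} : Finset _) = _
      rw [show partner p = ((partner p).1, p.2) from Prod.ext rfl (Fin.ext hc.1)]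
  -- every block is a chain, or has the collider pattern
  have hmotif : ∀ p ∈ ttArcs n, IsChainMotif (blk p) ∨
      ((partner p).2.1 = p.2.1 ∧ (partner p).1.1 ≠ p.1.1) := by
    intro p hp
    have hp' := mem_ttArcs.mp hp
    obtain ⟨h1, h2, h3, h4, h5, h6⟩ := partner_spec hadm hp'
    rcases h4 with hc | hc | hc
    · left
      refine ⟨p.1, p.2, (partner p).2, hp', ?_, ?_⟩
      · show p.2.1 < (partner p).2.1
        have := h1; rw [Fin.lt_def] at this; omega
      · show ({p, partner p} : Finset _) = _
        rw [show partner p = (p.2, (partner p).2) from Prod.ext (Fin.ext hc) rfl]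
    · left
      refine ⟨(partner p).1, p.1, p.2, ?_, hp', ?_⟩
      · show (partner p).1.1 < p.1.1
        have := h1; rw [Fin.lt_def] at this; omega
      · show ({p, partner p} : Finset _) = _
        rw [show partner p = ((partner p).1, p.1) from Prod.ext rfl (Fin.ext hc),
          Finset.pair_comm]
    · right; exact hc
  -- pairwise disjoint
  have hdisj : (P : Set (Finset (Fin n × Fin n))).PairwiseDisjoint id := by
    intro b1 hb1 b2 hb2 hne12
    obtain ⟨p, hp, rfl⟩ := hmem b1 hb1
    obtain ⟨q, hq, rfl⟩ := hmem b2 hb2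
    rw [Function.onFun, Finset.disjoint_left]
    intro a ha1 ha2
    apply hne12
    simp only [hblk, id_eq, Finset.mem_insert, Finset.mem_singleton] at ha1 ha2
    rcases ha1 with rfl | rfl
    · rcases ha2 with rfl | rfl
      · rfl
      · rw [← hblkinv q hq]
    · rcases ha2 with heq | heq
      · rw [← hblkinv p hp, heq]
      · have : p = q := by
          have h1 := hinv p hp
          have h2 := hinv q hq
          rw [← h1, ← h2, heq]
        rw [this]
  -- union is everything
  have hsup : P.sup id = ttArcs n := by
    apply le_antisymm
    · apply Finset.sup_le
      intro b hb
      obtain ⟨p, hp, rfl⟩ := hmem b hb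
      intro a ha
      simp only [hblk, id_eq, Finset.mem_insert, Finset.mem_singleton] at ha
      rcases ha with rfl | rfl
      · exact hp
      · exact hmemArcs p hp
    · intro a ha
      apply Finset.mem_sup.mpr
      exact ⟨blk a, Finset.mem_image_of_mem blk ha, by simp [hblk]⟩
  -- block cards
  have hcard2 : ∀ b ∈ P, b.card = 2 := by
    intro b hb
    obtain ⟨p, hp, rfl⟩ := hmem b hb
    exact Finset.card_pair (Ne.symm (hnep p hp))
  have hPcard : (ttArcs n).card = 2 * P.card := by
    have hb : P.biUnion id = ttArcs n := by
      rw [← Finset.sup_eq_biUnion]; exact hsup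
    have hcb : (P.biUnion id).card = ∑ b ∈ P, (id b).card := by
      apply Finset.card_biUnion
      intro x hx y hy hxy
      exact hdisj hx hy hxy
    rw [← hb, hcb]
    simp only [id_eq]
    rw [Finset.sum_congr rfl (fun b hb => hcard2 b hb), Finset.sum_const, smul_eq_mul]
    ring
  -- no forks
  have hnofork : ∀ b ∈ P, ¬ IsForkMotif b := by
    intro b hb
    obtain ⟨p, hp, rfl⟩ := hmem b hb
    rcases hmotif p hp with h | h
    · exact chain_not_fork h
    · exact collider_not_fork (hpatColl p hp h)
  -- collider blocks
  set D0 := (ttArcs n).filter (fun p => p.1.1 + p.2.1 = n - 1 ∧ p.1.1 % 2 = 0) with hD0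
  have hPcoll : P.filter IsColliderMotif = D0.image blk := by
    ext b
    simp only [Finset.mem_filter, Finset.mem_image]
    constructor
    · rintro ⟨hb, hcoll⟩
      obtain ⟨p, hp, rfl⟩ := hmem b hb
      have hp' := mem_ttArcs.mp hp
      obtain ⟨h1, h2, h3, h4, h5, h6⟩ := partner_spec hadm hp'
      have hpat : (partner p).2.1 = p.2.1 ∧ (partner p).1.1 ≠ p.1.1 := by
        rcases hmotif p hp with h | h
        · exact absurd hcoll (chain_not_collider h)
        · exact h
      rcases h5.mp hpat with ⟨hs, hpar, ha⟩ | ⟨hs, hpar, ha⟩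
      · exact ⟨p, Finset.mem_filter.mpr ⟨hp, hs, hpar⟩, rfl⟩
      · refine ⟨partner p, Finset.mem_filter.mpr ⟨hmemArcs p hp, ?_, ?_⟩, ?_⟩
        · rw [hpat.1, ha]; omega
        · rw [ha]; omega
        · exact hblkinv p hp
    · rintro ⟨p, hpD, rfl⟩
      rw [hD0, Finset.mem_filter] at hpD
      obtain ⟨hp, hs, hpar⟩ := hpD
      refine ⟨Finset.mem_image_of_mem blk hp, ?_⟩
      exact hpatColl p hp ((partner_spec hadm (mem_ttArcs.mp hp)).2.2.2.2.2 ⟨hs, hpar⟩)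
  have hinjD0 : Set.InjOn blk (D0 : Set (Fin n × Fin n)) := by
    intro p hpD q hqD hbe
    rw [Finset.mem_coe, hD0, Finset.mem_filter] at hpD hqD
    obtain ⟨hp, hsp, hparp⟩ := hpD
    obtain ⟨hq, hsq, hparq⟩ := hqD
    have hpmem : p ∈ blk q := by
      rw [← hbe]; simp [hblk]
    simp only [hblk, Finset.mem_insert, Finset.mem_singleton] at hpmem
    rcases hpmem with rfl | heq
    · rfl
    · exfalso
      have hq' := mem_ttArcs.mp hq
      obtain ⟨h1, h2, h3, h4, h5, h6⟩ := partner_spec hadm hq'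
      have hpat := h6 ⟨hsq, hparq⟩
      rcases h5.mp hpat with ⟨hs2, hpar2, ha2⟩ | ⟨hs2, hpar2, ha2⟩
      · have e1 : p.1.1 = (partner q).1.1 := by rw [heq]
        have e2 : p.2.1 = (partner q).2.1 := by rw [heq]
        have hqv : q.1.1 < q.2.1 := hq'
        omega
      · omega
  have hD0card : D0.card = c₀ := by
    rcases Nat.eq_zero_or_pos n with hn | hn
    · subst hn
      have : D0 = ∅ := Finset.eq_empty_of_forall_notMem (fun p _ => p.1.elim0)
      rw [this]
      simp [hc₀]
    · rw [show c₀ = (Finset.range c₀).card from (Finset.card_range c₀).symm]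
      refine Finset.card_bij' (fun p _ => p.1.1 / 2)
        (fun t ht => ((⟨2 * t % n, Nat.mod_lt _ hn⟩ : Fin n),
          (⟨(n - 1 - 2 * t) % n, Nat.mod_lt _ hn⟩ : Fin n))) ?_ ?_ ?_ ?_
      · intro p hp
        rw [hD0, Finset.mem_filter] at hp
        obtain ⟨hp, hs, hpar⟩ := hp
        have hv : p.1.1 < p.2.1 := mem_ttArcs.mp hp
        have hjn : p.2.1 < n := p.2.isLt
        simp only [Finset.mem_range]
        show p.1.1 / 2 < c₀
        rw [hc₀]
        rcases hadm with h | h <;> omega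
      · intro t ht
        rw [Finset.mem_range, hc₀] at ht
        have h2t : 2 * t < n := by rcases hadm with h | h <;> omega
        have h2t' : n - 1 - 2 * t < n := by omega
        rw [hD0, Finset.mem_filter, mem_ttArcs]
        refine ⟨?_, ?_, ?_⟩
        · show (2 * t % n) < (n - 1 - 2 * t) % n
          rw [Nat.mod_eq_of_lt h2t, Nat.mod_eq_of_lt h2t']
          rcases hadm with h | h <;> omega
        · show 2 * t % n + (n - 1 - 2 * t) % n = n - 1
          rw [Nat.mod_eq_of_lt h2t, Nat.mod_eq_of_lt h2t']
          omega
        · show 2 * t % n % 2 = 0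
          rw [Nat.mod_eq_of_lt h2t]
          omega
      · intro p hp
        rw [hD0, Finset.mem_filter] at hp
        obtain ⟨hp, hs, hpar⟩ := hp
        have hv : p.1.1 < p.2.1 := mem_ttArcs.mp hp
        have hjn : p.2.1 < n := p.2.isLt
        have h2t : 2 * (p.1.1 / 2) = p.1.1 := by omega
        refine Prod.ext (Fin.ext ?_) (Fin.ext ?_)
        · show 2 * (p.1.1 / 2) % n = p.1.1
          rw [h2t]
          exact Nat.mod_eq_of_lt p.1.isLt
        · show (n - 1 - 2 * (p.1.1 / 2)) % n = p.2.1
          rw [h2t, Nat.mod_eq_of_lt (by omega : n - 1 - p.1.1 < n)]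
          omega
      · intro t ht
        rw [Finset.mem_range, hc₀] at ht
        have h2t : 2 * t < n := by rcases hadm with h | h <;> omega
        show (2 * t % n) / 2 = t
        rw [Nat.mod_eq_of_lt h2t]
        omega
  have hcollcard : (P.filter IsColliderMotif).card = c₀ := by
    rw [hPcoll, Finset.card_image_of_injOn hinjD0, hD0card]
  -- chain card
  have hchain_iff : ∀ b ∈ P, IsChainMotif b ↔ ¬ IsColliderMotif b := by
    intro b hb
    constructor
    · exact chain_not_collider
    · intro hnc
      obtain ⟨p, hp, rfl⟩ := hmem b hb
      rcases hmotif p hp with h | h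
      · exact h
      · exact absurd (hpatColl p hp h) hnc
  have hchainfilter : P.filter IsChainMotif = P.filter (fun b => ¬ IsColliderMotif b) :=
    Finset.filter_congr hchain_iff
  have hsplit := Finset.card_filter_add_card_filter_not
    (s := P) (p := IsColliderMotif)
  have httc := ttArcs_card n
  refine ⟨P, ⟨hdisj, hsup⟩, ?_, ?_, ?_, ?_⟩
  · intro b hb
    obtain ⟨p, hp, rfl⟩ := hmem b hb
    rcases hmotif p hp with h | h
    · exact Or.inl h
    · exact Or.inr (Or.inl (hpatColl p hp h))
  · exact hcollcard
  · rw [hchainfilter]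
    have hcle : c₀ ≤ P.card := by
      rw [← hcollcard]; exact Finset.card_filter_le _ _
    omega
  · rw [Finset.filter_eq_empty_iff.mpr hnofork]
    rfl
end

section
/- For every admissible integer n, the transitive tournament TT_n admits a chain–collider–fork decomposition containing exactly ⌊n/4⌋ forks, exactly n(n−1)/4 − ⌊n/4⌋ colliders, and no chains. -/
open Finset

section PairBlocks

variable {α : Type*} [DecidableEq α] {σ : α → α} {s : Finset α}

def pairBlocks (σ : α → α) (s : Finset α) : Finset (Finset α) :=
  s.image fun a => {a, σ a}

lemma pair_eq_of_mem_pair {a x : α} (ha : σ (σ a) = a) (hx : x ∈ ({a, σ a} : Finset α)) :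
    ({x, σ x} : Finset α) = {a, σ a} := by
  simp only [mem_insert, mem_singleton] at hx
  rcases hx with rfl | rfl
  · rfl
  · rw [ha, pair_comm]

lemma pairBlocks_pairwiseDisjoint (hσσ : ∀ a ∈ s, σ (σ a) = a) :
    (pairBlocks σ s : Set (Finset α)).PairwiseDisjoint id := by
  simp only [pairBlocks, coe_image]
  rintro _ ⟨a, ha, rfl⟩ _ ⟨b, hb, rfl⟩ hne
  refine disjoint_left.mpr fun x hxa hxb => hne ?_
  dsimp only [id] at hxa hxb ⊢
  rw [← pair_eq_of_mem_pair (hσσ a ha) hxa, pair_eq_of_mem_pair (hσσ b hb) hxb]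

lemma sup_pairBlocks (hσ : ∀ a ∈ s, σ a ∈ s) : (pairBlocks σ s).sup id = s := by
  refine le_antisymm (Finset.sup_le ?_) fun a ha =>
    mem_sup.mpr ⟨_, mem_image_of_mem _ ha, mem_insert_self a _⟩
  simp only [pairBlocks, mem_image]
  rintro _ ⟨a, ha, rfl⟩
  exact insert_subset ha (singleton_subset_iff.mpr (hσ a ha))

lemma two_mul_card_filter_pairBlocks (hσ : ∀ a ∈ s, σ a ∈ s) (hσσ : ∀ a ∈ s, σ (σ a) = a)
    (hfix : ∀ a ∈ s, σ a ≠ a) (Q : Finset α → Prop) [DecidablePred Q] :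
    2 * #((pairBlocks σ s).filter Q) = #{a ∈ s | Q {a, σ a}} := by
  have hunion : {a ∈ s | Q {a, σ a}} = ((pairBlocks σ s).filter Q).biUnion id := by
    ext x
    simp only [mem_filter, mem_biUnion, pairBlocks, mem_image, id]
    constructor
    · rintro ⟨hx, hQ⟩
      exact ⟨_, ⟨⟨x, hx, rfl⟩, hQ⟩, mem_insert_self x _⟩
    · rintro ⟨_, ⟨⟨a, ha, rfl⟩, hQ⟩, hx⟩
      rw [pair_eq_of_mem_pair (hσσ a ha) hx]
      simp only [mem_insert, mem_singleton] at hx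
      rcases hx with rfl | rfl
      exacts [⟨ha, hQ⟩, ⟨hσ a ha, hQ⟩]
  rw [hunion, card_biUnion ((pairBlocks_pairwiseDisjoint hσσ).subset (filter_subset _ _)),
    sum_const_nat, mul_comm]
  simp only [mem_filter, pairBlocks, mem_image, id]
  rintro _ ⟨⟨a, ha, rfl⟩, -⟩
  exact card_pair (hfix a ha).symm

end PairBlocks

section Motifs

variable {n : ℕ} {b : Finset (Fin n × Fin n)}

lemma IsChainMotif.card_image_fst (h : IsChainMotif b) : #(b.image Prod.fst) = 2 := by
  obtain ⟨i, j, k, hij, -, rfl⟩ := h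
  rw [image_insert, image_singleton, card_pair hij.ne]

lemma IsChainMotif.card_image_snd (h : IsChainMotif b) : #(b.image Prod.snd) = 2 := by
  obtain ⟨i, j, k, -, hjk, rfl⟩ := h
  rw [image_insert, image_singleton, card_pair hjk.ne]

lemma IsColliderMotif.card_image_fst (h : IsColliderMotif b) : #(b.image Prod.fst) = 2 := by
  obtain ⟨i, k, j, -, -, hik, rfl⟩ := h
  rw [image_insert, image_singleton, card_pair hik]

lemma IsColliderMotif.card_image_snd (h : IsColliderMotif b) : #(b.image Prod.snd) = 1 := by
  obtain ⟨i, k, j, -, -, -, rfl⟩ := h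
  simp

lemma IsForkMotif.card_image_fst (h : IsForkMotif b) : #(b.image Prod.fst) = 1 := by
  obtain ⟨i, j, k, -, -, -, rfl⟩ := h
  simp

lemma IsChainMotif.not_isColliderMotif (h : IsChainMotif b) : ¬IsColliderMotif b := fun h' => by
  simpa [h'.card_image_snd] using h.card_image_snd

lemma IsChainMotif.not_isForkMotif (h : IsChainMotif b) : ¬IsForkMotif b := fun h' => by
  simpa [h'.card_image_fst] using h.card_image_fst

lemma IsColliderMotif.not_isForkMotif (h : IsColliderMotif b) : ¬IsForkMotif b := fun h' => by
  simpa [h'.card_image_fst] using h.card_image_fst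

lemma isColliderMotif_pair {a c : Fin n × Fin n} (ha : a.1 < a.2) (hc : c.1 < c.2)
    (hsnd : c.2 = a.2) (hfst : a.1 ≠ c.1) : IsColliderMotif {a, c} := by
  obtain ⟨i, j⟩ := a
  obtain ⟨k, j'⟩ := c
  obtain rfl : j' = j := hsnd
  exact ⟨i, k, _, ha, hc, hfst, rfl⟩

lemma isForkMotif_pair {a c : Fin n × Fin n} (ha : a.1 < a.2) (hc : c.1 < c.2)
    (hfst : c.1 = a.1) (hsnd : a.2 ≠ c.2) : IsForkMotif {a, c} := by
  obtain ⟨i, j⟩ := a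
  obtain ⟨i', k⟩ := c
  obtain rfl : i' = i := hfst
  exact ⟨_, j, k, ha, hc, hsnd, rfl⟩

end Motifs

lemma card_ttArcs (n : ℕ) : #(ttArcs n) = n.choose 2 := by
  simpa [ttArcs] using Fintype.card_product_filter_lt (α := Fin n)

lemma card_filter_ttArcs_fst_eq_zero_snd_odd (n : ℕ) :
    #{a ∈ ttArcs n | (a.1 : ℕ) = 0 ∧ (a.2 : ℕ) % 2 = 1} = n / 2 := by
  rw [← Nat.card_multiples n 2]
  refine card_bij (fun a _ => (a.2 : ℕ)) ?_ ?_ ?_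
  · simp only [mem_filter, mem_range]
    rintro a ⟨-, -, hodd⟩
    exact ⟨a.2.isLt, by omega⟩
  · simp only [ttArcs, mem_filter, mem_univ, true_and]
    rintro a ⟨-, ha0, -⟩ b ⟨-, hb0, -⟩ h
    exact Prod.ext (Fin.ext (ha0.trans hb0.symm)) (Fin.ext h)
  · simp only [ttArcs, mem_filter, mem_range, mem_univ, true_and]
    rintro j ⟨hj, hodd⟩
    refine ⟨(⟨0, by omega⟩, ⟨j, hj⟩), ⟨Fin.mk_lt_mk.mpr (by omega), rfl, ?_⟩, rfl⟩
    change j % 2 = 1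
    omega

def natArcPartner (a : ℕ × ℕ) : ℕ × ℕ :=
  if a.1 = 0 ∧ a.2 % 2 = 1 then (0, if a.2 % 4 = 1 then a.2 + 2 else a.2 - 2)
  else (if (a.1 + a.2) % 2 = 0 then a.1 + 1 else a.1 - 1, a.2)

lemma natArcPartner_lt {n i j : ℕ} (hn : Admissible n) (hij : i < j) (hj : j < n) :
    (natArcPartner (i, j)).1 < (natArcPartner (i, j)).2 ∧ (natArcPartner (i, j)).2 < n := by
  unfold Admissible at hn
  unfold natArcPartner
  split_ifs <;> simp only <;> omega

lemma natArcPartner_involutive : Function.Involutive natArcPartner := by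
  rintro ⟨i, j⟩
  unfold natArcPartner
  split_ifs <;> simp only [Prod.mk.injEq, true_and, and_true, false_and] at * <;> omega

lemma natArcPartner_ne (a : ℕ × ℕ) : natArcPartner a ≠ a := by
  unfold natArcPartner
  split_ifs <;> simp only [ne_eq, Prod.ext_iff] <;> omega

/-- On arcs of `TT n` with `n` admissible the `else` branch is never taken (`arcPartner_val`). -/
def arcPartner {n : ℕ} (a : Fin n × Fin n) : Fin n × Fin n :=
  if h : (natArcPartner (a.1, a.2)).1 < n ∧ (natArcPartner (a.1, a.2)).2 < n then
    (⟨_, h.1⟩, ⟨_, h.2⟩)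
  else a

section ArcPartner

variable {n : ℕ} {a : Fin n × Fin n}

lemma arcPartner_val (hn : Admissible n) (ha : a ∈ ttArcs n) :
    ((arcPartner a).1.val, (arcPartner a).2.val) = natArcPartner (a.1, a.2) := by
  have hlt := natArcPartner_lt hn (mem_filter.mp ha).2 a.2.isLt
  rw [arcPartner, dif_pos ⟨hlt.1.trans hlt.2, hlt.2⟩]

lemma arcPartner_mem_ttArcs (hn : Admissible n) (ha : a ∈ ttArcs n) : arcPartner a ∈ ttArcs n := by
  have hlt := natArcPartner_lt hn (mem_filter.mp ha).2 a.2.isLt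
  rw [← arcPartner_val hn ha] at hlt
  exact mem_filter.mpr ⟨mem_univ _, hlt.1⟩

lemma arcPartner_arcPartner (hn : Admissible n) (ha : a ∈ ttArcs n) :
    arcPartner (arcPartner a) = a := by
  have h := arcPartner_val hn (arcPartner_mem_ttArcs hn ha)
  rw [arcPartner_val hn ha, natArcPartner_involutive] at h
  simpa only [Prod.ext_iff, Fin.ext_iff] using h

lemma arcPartner_ne (hn : Admissible n) (ha : a ∈ ttArcs n) : arcPartner a ≠ a := fun h =>
  natArcPartner_ne _ (by rw [← arcPartner_val hn ha, h])

lemma isForkMotif_pair_arcPartner (hn : Admissible n) (ha : a ∈ ttArcs n)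
    (h : (a.1 : ℕ) = 0 ∧ (a.2 : ℕ) % 2 = 1) : IsForkMotif {a, arcPartner a} := by
  have hval := arcPartner_val hn ha
  refine isForkMotif_pair (mem_filter.mp ha).2 (mem_filter.mp (arcPartner_mem_ttArcs hn ha)).2
    ?_ ?_ <;> simp only [ne_eq, Fin.ext_iff] <;> unfold natArcPartner at hval <;>
    split_ifs at hval <;> simp only [Prod.mk.injEq] at hval <;> omega

lemma isColliderMotif_pair_arcPartner (hn : Admissible n) (ha : a ∈ ttArcs n)
    (h : ¬((a.1 : ℕ) = 0 ∧ (a.2 : ℕ) % 2 = 1)) : IsColliderMotif {a, arcPartner a} := by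
  have hval := arcPartner_val hn ha
  refine isColliderMotif_pair (mem_filter.mp ha).2 (mem_filter.mp (arcPartner_mem_ttArcs hn ha)).2
    ?_ ?_ <;> simp only [ne_eq, Fin.ext_iff] <;> unfold natArcPartner at hval <;>
    split_ifs at hval <;> simp only [Prod.mk.injEq] at hval <;> omega

lemma isForkMotif_pair_arcPartner_iff (hn : Admissible n) (ha : a ∈ ttArcs n) :
    IsForkMotif {a, arcPartner a} ↔ (a.1 : ℕ) = 0 ∧ (a.2 : ℕ) % 2 = 1 := by
  refine ⟨fun hfork => ?_, isForkMotif_pair_arcPartner hn ha⟩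
  by_contra h
  exact (isColliderMotif_pair_arcPartner hn ha h).not_isForkMotif hfork

lemma isColliderMotif_or_isForkMotif_of_mem_pairBlocks {b : Finset (Fin n × Fin n)}
    (hn : Admissible n) (hb : b ∈ pairBlocks arcPartner (ttArcs n)) :
    IsColliderMotif b ∨ IsForkMotif b := by
  obtain ⟨a, ha, rfl⟩ := mem_image.mp hb
  by_cases h : (a.1 : ℕ) = 0 ∧ (a.2 : ℕ) % 2 = 1
  · exact .inr (isForkMotif_pair_arcPartner hn ha h)
  · exact .inl (isColliderMotif_pair_arcPartner hn ha h)

end ArcPartner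

theorem tt_collider_fork_decomposition (n : ℕ) (hadm : Admissible n) :
    ∃ P : Finset (Finset (Fin n × Fin n)),
      IsTTDecomposition P ∧ (∀ b ∈ P, IsChainMotif b ∨ IsColliderMotif b ∨ IsForkMotif b) ∧
      (P.filter IsForkMotif).card = n / 4 ∧
      (P.filter IsColliderMotif).card = n * (n - 1) / 4 - n / 4 ∧
      (P.filter IsChainMotif).card = 0 := by
  have hmaps a (ha : a ∈ ttArcs n) := arcPartner_mem_ttArcs hadm ha
  have hinv a (ha : a ∈ ttArcs n) := arcPartner_arcPartner hadm ha
  have hfix a (ha : a ∈ ttArcs n) := arcPartner_ne hadm ha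
  set P := pairBlocks arcPartner (ttArcs n)
  have hmotif b (hb : b ∈ P) := isColliderMotif_or_isForkMotif_of_mem_pairBlocks hadm hb
  have hforks : 2 * #(P.filter IsForkMotif) = n / 2 := by
    rw [two_mul_card_filter_pairBlocks hmaps hinv hfix IsForkMotif,
      ← card_filter_ttArcs_fst_eq_zero_snd_odd,
      filter_congr fun a ha => isForkMotif_pair_arcPartner_iff hadm ha]
  have hblocks : 2 * #P = n.choose 2 := by
    simpa [card_ttArcs] using two_mul_card_filter_pairBlocks hmaps hinv hfix fun _ => True
  have hsplit : #(P.filter IsColliderMotif) + #(P.filter IsForkMotif) = #P := by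
    have hcoll : P.filter IsColliderMotif = P.filter (¬IsForkMotif ·) :=
      filter_congr fun b hb => ⟨IsColliderMotif.not_isForkMotif, (hmotif b hb).resolve_right⟩
    rw [hcoll, add_comm, card_filter_add_card_filter_not]
  refine ⟨P, ⟨pairBlocks_pairwiseDisjoint hinv, sup_pairBlocks hmaps⟩,
    fun b hb => .inr (hmotif b hb), by omega, ?_, ?_⟩
  · rw [Nat.choose_two_right] at hblocks
    omega
  · exact card_eq_zero.mpr <| filter_eq_empty_iff.mpr fun b hb hchain =>
      (hmotif b hb).elim hchain.not_isColliderMotif hchain.not_isForkMotif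
end
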